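/- Fix an integer 0 ≤ i ≤ k−1 with A_i ≠ ∅ and vertices x, y ∈ V, and let m = max{d_G(x, p_i(x)), d_G(y, p_i(y)), d_G(x, y)}. Then at least one of the following holds: (1) d_H(x, y) ≤ 5m; or (2) A_{i+1} ≠ ∅ and d_H(x, p_{i+1}(x)) ≤ 7m. -/

import Mathlib

/-!
Let `X = p_i(x)` and `Y = p_i(y)`; both lie in `A_i` and `d_G(X, Y) ≤ 3m`. If `Y` lies in the
half-bunch of `X`, the path `P_{XY}` is in `H` and `x → X → Y → y` has weight at most `5m`.
Otherwise some `a ∈ A_{i+1}` has `d_G(X, a) ≤ 2 d_G(X, Y) ≤ 6m`, so `d_G(x, A_{i+1}) ≤ 7m`.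

Both routes need `d_H(v, p_t(v)) ≤ d_G(v, p_t(v))`. For `v ∉ A_t` the pivot is in the half-bunch
of `v`. For `v ∈ A_t` the pivot is at distance zero (edge weights may vanish), and zero distances
between vertices of `A_j` survive in `H` by downward induction on `j`: either they are witnessed
by a half-bunch, or both endpoints are at distance zero from `A_{j+1}`.
-/

open scoped ENNReal Classical

namespace ASP

variable {V : Type*}

noncomputable def wWeight {G : SimpleGraph V} (w : V → V → ℝ≥0∞) {x y : V}
    (p : G.Walk x y) : ℝ≥0∞ :=
  (p.darts.map fun d => w d.toProd.1 d.toProd.2).sum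

noncomputable def gdist (G : SimpleGraph V) (w : V → V → ℝ≥0∞) (x y : V) : ℝ≥0∞ :=
  ⨅ p : G.Walk x y, wWeight w p

noncomputable def maxW {G : SimpleGraph V} (w : V → V → ℝ≥0∞) {x y : V}
    (p : G.Walk x y) : ℝ≥0∞ :=
  (p.darts.map fun d => w d.toProd.1 d.toProd.2).foldr max 0

/-- The half-bunch of a vertex `u` of level `i`: all vertices of `A i` closer to `u` than half
the distance from `u` to `A (i+1)` (vacuously all of `A i` if `A (i+1) = ∅`), together with the
pivots of all nonempty higher levels. -/
def halfBunch (G : SimpleGraph V) (w : V → V → ℝ≥0∞) (A : ℕ → Set V) (pv : ℕ → V → V)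
    (k i : ℕ) (u : V) : Set V :=
  {v | v ∈ A i ∧ ∀ a ∈ A (i + 1), gdist G w u v < gdist G w u a / 2} ∪
    {v | ∃ j, i < j ∧ j < k ∧ (A j).Nonempty ∧ v = pv j u}

/-- The spanner `H`: the subgraph of `G` which is the union of the fixed shortest paths `P u v`
over all `u ∈ A i \ A (i+1)` and `v` in the half-bunch of `u`. -/
def spanGraph (G : SimpleGraph V) (w : V → V → ℝ≥0∞) (A : ℕ → Set V) (pv : ℕ → V → V)
    (k : ℕ) (P : ∀ u v : V, G.Walk u v) : SimpleGraph V where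
  Adj a b := ∃ u v i, u ∈ A i ∧ u ∉ A (i + 1) ∧ v ∈ halfBunch G w A pv k i u ∧
      s(a, b) ∈ (P u v).edges
  symm := by
    constructor
    rintro a b ⟨u, v, i, h1, h2, h3, he⟩
    exact ⟨u, v, i, h1, h2, h3, by rwa [Sym2.eq_swap] at he⟩
  loopless := by
    constructor
    rintro a ⟨u, v, i, _, _, _, he⟩
    exact G.loopless.irrefl a ((P u v).adj_of_mem_edges he)

section Distance

variable {G : SimpleGraph V} {w : V → V → ℝ≥0∞}

lemma wWeight_append {x y z : V} (p : G.Walk x y) (q : G.Walk y z) :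
    wWeight w (p.append q) = wWeight w p + wWeight w q := by
  simp [wWeight, SimpleGraph.Walk.darts_append]

lemma wWeight_reverse (hw : ∀ u v, G.Adj u v → w u v = w v u) {x y : V} (p : G.Walk x y) :
    wWeight w p.reverse = wWeight w p := by
  simp only [wWeight, SimpleGraph.Walk.darts_reverse, List.map_reverse, List.sum_reverse,
    List.map_map]
  exact congrArg List.sum (List.map_congr_left fun d _ => (hw _ _ d.adj).symm)

lemma wWeight_transfer {H : SimpleGraph V} {x y : V} (p : G.Walk x y)
    (hp : ∀ e ∈ p.edges, e ∈ H.edgeSet) : wWeight w (p.transfer H hp) = wWeight w p := by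
  induction p with
  | nil => rfl
  | cons _ p ih => exact congrArg (w _ _ + ·) (ih _)

lemma gdist_le_wWeight {x y : V} (p : G.Walk x y) : gdist G w x y ≤ wWeight w p :=
  iInf_le _ p

lemma gdist_self (x : V) : gdist G w x x = 0 :=
  nonpos_iff_eq_zero.mp (gdist_le_wWeight .nil)

lemma gdist_triangle (x y z : V) : gdist G w x z ≤ gdist G w x y + gdist G w y z := by
  simp only [gdist, ENNReal.iInf_add, ENNReal.add_iInf]
  exact le_iInf₂ fun q p => (gdist_le_wWeight (p.append q)).trans_eq (wWeight_append p q)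

lemma gdist_comm (hw : ∀ u v, G.Adj u v → w u v = w v u) (x y : V) :
    gdist G w x y = gdist G w y x := by
  have h : ∀ a b : V, gdist G w a b ≤ gdist G w b a := fun a b =>
    le_iInf fun p => (gdist_le_wWeight p.reverse).trans_eq (wWeight_reverse hw p)
  exact le_antisymm (h x y) (h y x)

lemma gdist_triangle3 (x y z t : V) :
    gdist G w x t ≤ gdist G w x y + gdist G w y z + gdist G w z t :=
  (gdist_triangle x z t).trans (add_le_add_left (gdist_triangle x y z) _)

lemma gdist_eq_zero_trans {x y z : V} (hxy : gdist G w x y = 0) (hyz : gdist G w y z = 0) :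
    gdist G w x z = 0 :=
  nonpos_iff_eq_zero.mp <| (gdist_triangle x y z).trans_eq (by rw [hxy, hyz, add_zero])

lemma gdist_le_wWeight_of_edges_subset {H : SimpleGraph V} {x y : V} (p : G.Walk x y)
    (hp : ∀ e ∈ p.edges, e ∈ H.edgeSet) : gdist H w x y ≤ wWeight w p :=
  (gdist_le_wWeight (p.transfer H hp)).trans_eq (wWeight_transfer p hp)

end Distance

lemma lt_of_nonempty_of_eq_empty {A : ℕ → Set V} (hA : ∀ i, A (i + 1) ⊆ A i) {j k : ℕ}
    (hAk : A k = ∅) (hAj : (A j).Nonempty) : j < k := by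
  by_contra! hkj
  obtain ⟨v, hv⟩ := hAj
  simpa [hAk] using antitone_nat_of_succ_le hA hkj hv

lemma exists_mem_notMem_succ {A : ℕ → Set V} (hA0 : A 0 = Set.univ) {x : V} {t : ℕ}
    (hx : x ∉ A t) : ∃ l < t, x ∈ A l ∧ x ∉ A (l + 1) := by
  induction t with
  | zero => exact absurd (hA0 ▸ Set.mem_univ x) hx
  | succ t ih =>
    by_cases h : x ∈ A t
    · exact ⟨t, lt_add_one t, h, hx⟩
    · obtain ⟨l, hl, h1, h2⟩ := ih h
      exact ⟨l, hl.trans (lt_add_one t), h1, h2⟩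

def IsPivotMap (G : SimpleGraph V) (w : V → V → ℝ≥0∞) (A : ℕ → Set V) (pv : ℕ → V → V)
    (k : ℕ) : Prop :=
  ∀ i < k, ∀ v : V, (A i).Nonempty →
    pv i v ∈ A i ∧ ∀ a ∈ A i, gdist G w v (pv i v) ≤ gdist G w v a

def IsShortestOnHalfBunches (G : SimpleGraph V) (w : V → V → ℝ≥0∞) (A : ℕ → Set V)
    (pv : ℕ → V → V) (k : ℕ) (P : ∀ u v : V, G.Walk u v) : Prop :=
  ∀ u v i, u ∈ A i → u ∉ A (i + 1) → v ∈ halfBunch G w A pv k i u →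
    wWeight w (P u v) = gdist G w u v

section Spanner

variable {G : SimpleGraph V} {w : V → V → ℝ≥0∞} {A : ℕ → Set V} {pv : ℕ → V → V} {k : ℕ}
  {P : ∀ u v : V, G.Walk u v}

lemma spanGraph_le : spanGraph G w A pv k P ≤ G := by
  rintro a b ⟨u, v, i, -, -, -, he⟩
  exact (P u v).adj_of_mem_edges he

lemma gdist_spanGraph_comm (hw : ∀ u v, G.Adj u v → w u v = w v u) (x y : V) :
    gdist (spanGraph G w A pv k P) w x y = gdist (spanGraph G w A pv k P) w y x :=
  gdist_comm (fun u v h => hw u v (spanGraph_le h)) x y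

lemma gdist_spanGraph_le_of_mem_halfBunch (hP : IsShortestOnHalfBunches G w A pv k P)
    {u v : V} {l : ℕ} (hu : u ∈ A l) (hu' : u ∉ A (l + 1)) (hv : v ∈ halfBunch G w A pv k l u) :
    gdist (spanGraph G w A pv k P) w u v ≤ gdist G w u v :=
  (gdist_le_wWeight_of_edges_subset (P u v) fun e he => by
    induction e using Sym2.ind with
    | _ a b => exact ⟨u, v, l, hu, hu', hv, he⟩).trans_eq (hP u v l hu hu' hv)

lemma gdist_spanGraph_pivot_le_of_notMem (hA0 : A 0 = Set.univ)
    (hP : IsShortestOnHalfBunches G w A pv k P) {v : V} {t : ℕ} (ht : t < k)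
    (hAt : (A t).Nonempty) (hv : v ∉ A t) :
    gdist (spanGraph G w A pv k P) w v (pv t v) ≤ gdist G w v (pv t v) := by
  obtain ⟨l, hl, hvl, hvl'⟩ := exists_mem_notMem_succ hA0 hv
  exact gdist_spanGraph_le_of_mem_halfBunch hP hvl hvl' (Or.inr ⟨t, hl, ht, hAt, rfl⟩)

lemma exists_mem_gdist_spanGraph_eq_zero_of_gdist_eq_zero (hA0 : A 0 = Set.univ)
    (hpv : IsPivotMap G w A pv k) (hP : IsShortestOnHalfBunches G w A pv k P) {v a : V} {t : ℕ}
    (ht : t < k) (ha : a ∈ A t) (hva : gdist G w v a = 0) :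
    ∃ v' ∈ A t, gdist G w v v' = 0 ∧ gdist (spanGraph G w A pv k P) w v v' = 0 := by
  by_cases hv : v ∈ A t
  · exact ⟨v, hv, gdist_self v, gdist_self v⟩
  obtain ⟨hpA, hpmin⟩ := hpv t ht v ⟨a, ha⟩
  have hG : gdist G w v (pv t v) = 0 := nonpos_iff_eq_zero.mp ((hpmin a ha).trans_eq hva)
  refine ⟨pv t v, hpA, hG, nonpos_iff_eq_zero.mp ?_⟩
  exact (gdist_spanGraph_pivot_le_of_notMem hA0 hP ht ⟨a, ha⟩ hv).trans_eq hG

theorem gdist_spanGraph_eq_zero_of_gdist_eq_zero (hw : ∀ u v, G.Adj u v → w u v = w v u)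
    (hA0 : A 0 = Set.univ) (hA : ∀ i, A (i + 1) ⊆ A i) (hAk : A k = ∅)
    (hpv : IsPivotMap G w A pv k) (hP : IsShortestOnHalfBunches G w A pv k P) {j : ℕ} {u z : V}
    (hu : u ∈ A j) (hz : z ∈ A j) (huz : gdist G w u z = 0) :
    gdist (spanGraph G w A pv k P) w u z = 0 := by
  by_cases hlift : ∃ a ∈ A (j + 1), gdist G w u a = 0
  · obtain ⟨a, ha, hua⟩ := hlift
    have hjk : j + 1 < k := lt_of_nonempty_of_eq_empty hA hAk ⟨a, ha⟩
    have hza : gdist G w z a = 0 := gdist_eq_zero_trans (gdist_comm hw u z ▸ huz) hua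
    obtain ⟨u', hu', hGu, hHu⟩ :=
      exists_mem_gdist_spanGraph_eq_zero_of_gdist_eq_zero hA0 hpv hP hjk ha hua
    obtain ⟨z', hz', hGz, hHz⟩ :=
      exists_mem_gdist_spanGraph_eq_zero_of_gdist_eq_zero hA0 hpv hP hjk ha hza
    have hG' : gdist G w u' z' = 0 :=
      gdist_eq_zero_trans (gdist_eq_zero_trans (gdist_comm hw u u' ▸ hGu) huz) hGz
    have hH' := gdist_spanGraph_eq_zero_of_gdist_eq_zero hw hA0 hA hAk hpv hP hu' hz' hG'
    exact gdist_eq_zero_trans hHu (gdist_eq_zero_trans hH' (gdist_spanGraph_comm hw z z' ▸ hHz))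
  · push Not at hlift
    have hu' : u ∉ A (j + 1) := fun h => hlift u h (gdist_self u)
    have hz_mem : z ∈ halfBunch G w A pv k j u := Or.inl ⟨hz, fun a ha => by
      rw [huz]
      exact ENNReal.div_pos (hlift a ha) ENNReal.ofNat_ne_top⟩
    exact nonpos_iff_eq_zero.mp
      ((gdist_spanGraph_le_of_mem_halfBunch hP hu hu' hz_mem).trans_eq huz)
termination_by k - j
decreasing_by omega

theorem gdist_spanGraph_pivot_le (hw : ∀ u v, G.Adj u v → w u v = w v u)
    (hA0 : A 0 = Set.univ) (hA : ∀ i, A (i + 1) ⊆ A i) (hAk : A k = ∅)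
    (hpv : IsPivotMap G w A pv k) (hP : IsShortestOnHalfBunches G w A pv k P) {t : ℕ}
    (hAt : (A t).Nonempty) (v : V) :
    gdist (spanGraph G w A pv k P) w v (pv t v) ≤ gdist G w v (pv t v) := by
  have ht : t < k := lt_of_nonempty_of_eq_empty hA hAk hAt
  by_cases hv : v ∈ A t
  · obtain ⟨hpA, hpmin⟩ := hpv t ht v hAt
    have hG : gdist G w v (pv t v) = 0 :=
      nonpos_iff_eq_zero.mp ((hpmin v hv).trans_eq (gdist_self v))
    rw [gdist_spanGraph_eq_zero_of_gdist_eq_zero hw hA0 hA hAk hpv hP hv hpA hG]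
    exact zero_le
  · exact gdist_spanGraph_pivot_le_of_notMem hA0 hP ht hAt hv

lemma gdist_spanGraph_le_or_exists_mem_succ_le (hP : IsShortestOnHalfBunches G w A pv k P)
    {X Y : V} {i : ℕ} (hX : X ∈ A i) (hY : Y ∈ A i) :
    gdist (spanGraph G w A pv k P) w X Y ≤ gdist G w X Y ∨
      ∃ a ∈ A (i + 1), gdist G w X a ≤ 2 * gdist G w X Y := by
  by_cases hfar : ∀ a ∈ A (i + 1), gdist G w X Y < gdist G w X a / 2
  · have hX' : X ∉ A (i + 1) := fun h => by simpa [gdist_self] using hfar X h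
    exact Or.inl (gdist_spanGraph_le_of_mem_halfBunch hP hX hX' (Or.inl ⟨hY, hfar⟩))
  · push Not at hfar
    obtain ⟨a, ha, haY⟩ := hfar
    refine Or.inr ⟨a, ha, ?_⟩
    rwa [ENNReal.div_le_iff two_ne_zero ENNReal.ofNat_ne_top, mul_comm] at haY

end Spanner

theorem statement12_general (G : SimpleGraph V)
    (w : V → V → ℝ≥0∞) (hwsym : ∀ u v, G.Adj u v → w u v = w v u)
    (k : ℕ) (A : ℕ → Set V) (hA0 : A 0 = Set.univ)
    (hAnest : ∀ i, A (i + 1) ⊆ A i) (hAk : A k = ∅)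
    (pv : ℕ → V → V)
    (hpv : ∀ i, i < k → ∀ v : V, (A i).Nonempty →
      pv i v ∈ A i ∧ ∀ a ∈ A i, gdist G w v (pv i v) ≤ gdist G w v a)
    (P : ∀ u v : V, G.Walk u v)
    (hP : ∀ u v i, u ∈ A i → u ∉ A (i + 1) → v ∈ halfBunch G w A pv k i u →
      (P u v).IsPath ∧ wWeight w (P u v) = gdist G w u v)
    (i : ℕ) (hAi : (A i).Nonempty) (x y : V) :
    gdist (spanGraph G w A pv k P) w x y ≤
        5 * max (gdist G w x (pv i x)) (max (gdist G w y (pv i y)) (gdist G w x y)) ∨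
      ((A (i + 1)).Nonempty ∧
        gdist (spanGraph G w A pv k P) w x (pv (i + 1) x) ≤
          7 * max (gdist G w x (pv i x)) (max (gdist G w y (pv i y)) (gdist G w x y))) := by
  set H := spanGraph G w A pv k P
  set m := max (gdist G w x (pv i x)) (max (gdist G w y (pv i y)) (gdist G w x y))
  set X := pv i x
  set Y := pv i y
  have hP' : IsShortestOnHalfBunches G w A pv k P := fun u v i hu hu' hv => (hP u v i hu hu' hv).2
  have hpivot {t : ℕ} (hAt : (A t).Nonempty) (v : V) :
      gdist H w v (pv t v) ≤ gdist G w v (pv t v) :=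
    gdist_spanGraph_pivot_le hwsym hA0 hAnest hAk hpv hP' hAt v
  have hi : i < k := lt_of_nonempty_of_eq_empty hAnest hAk hAi
  have hxX : gdist G w x X ≤ m := le_max_left _ _
  have hyY : gdist G w y Y ≤ m := (le_max_left _ _).trans (le_max_right _ _)
  have hxy : gdist G w x y ≤ m := (le_max_right _ _).trans (le_max_right _ _)
  have hXY : gdist G w X Y ≤ 3 * m := calc
    gdist G w X Y ≤ gdist G w X x + gdist G w x y + gdist G w y Y := gdist_triangle3 X x y Y
    _ ≤ m + m + m := by rw [gdist_comm hwsym X x]; gcongr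
    _ = 3 * m := by ring
  rcases gdist_spanGraph_le_or_exists_mem_succ_le hP' (hpv i hi x hAi).1 (hpv i hi y hAi).1
    with hHXY | ⟨a, ha, hXa⟩
  · refine Or.inl (calc
      gdist H w x y ≤ gdist H w x X + gdist H w X Y + gdist H w Y y := gdist_triangle3 x X Y y
      _ ≤ m + 3 * m + m := by
        rw [gdist_spanGraph_comm hwsym Y y]
        gcongr
        exacts [(hpivot hAi x).trans hxX, hHXY.trans hXY, (hpivot hAi y).trans hyY]
      _ = 5 * m := by ring)
  · have hA1 : (A (i + 1)).Nonempty := ⟨a, ha⟩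
    refine Or.inr ⟨hA1, calc
      gdist H w x (pv (i + 1) x) ≤ gdist G w x (pv (i + 1) x) := hpivot hA1 x
      _ ≤ gdist G w x a :=
        (hpv (i + 1) (lt_of_nonempty_of_eq_empty hAnest hAk hA1) x hA1).2 a ha
      _ ≤ gdist G w x X + gdist G w X a := gdist_triangle x X a
      _ ≤ m + 2 * (3 * m) := by gcongr; exact hXa.trans (by gcongr)
      _ = 7 * m := by ring⟩

/-- Lemma D.3: with `m = max{d_G(x,p_i(x)), d_G(y,p_i(y)), d_G(x,y)}`, either
`d_H(x,y) ≤ 5m`, or `A_{i+1} ≠ ∅` and `d_H(x, p_{i+1}(x)) ≤ 7m`. -/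
theorem statement12 [Fintype V] (G : SimpleGraph V) (hconn : G.Connected)
    (w : V → V → ℝ≥0∞) (hwsym : ∀ u v, G.Adj u v → w u v = w v u)
    (hwfin : ∀ u v, G.Adj u v → w u v ≠ ⊤)
    (k : ℕ) (hk : 1 ≤ k) (A : ℕ → Set V) (hA0 : A 0 = Set.univ)
    (hAnest : ∀ i, A (i + 1) ⊆ A i) (hAk : A k = ∅)
    (pv : ℕ → V → V)
    (hpv : ∀ i, i < k → ∀ v : V, (A i).Nonempty →
      pv i v ∈ A i ∧ ∀ a ∈ A i, gdist G w v (pv i v) ≤ gdist G w v a)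
    (P : ∀ u v : V, G.Walk u v)
    (hP : ∀ u v i, u ∈ A i → u ∉ A (i + 1) → v ∈ halfBunch G w A pv k i u →
      (P u v).IsPath ∧ wWeight w (P u v) = gdist G w u v)
    (i : ℕ) (hi : i < k) (hAi : (A i).Nonempty) (x y : V) :
    gdist (spanGraph G w A pv k P) w x y ≤
        5 * max (gdist G w x (pv i x)) (max (gdist G w y (pv i y)) (gdist G w x y)) ∨
      ((A (i + 1)).Nonempty ∧
        gdist (spanGraph G w A pv k P) w x (pv (i + 1) x) ≤
          7 * max (gdist G w x (pv i x)) (max (gdist G w y (pv i y)) (gdist G w x y))) :=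
  statement12_general G w hwsym k A hA0 hAnest hAk pv hpv P hP i hAi x y

end ASP
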